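/- arXiv:2007.06931 — 2 statements merged into one kernel-verified Lean document; each statement's English description precedes it below -/
import Mathlib

section
/- Let P_E and P_O be the stochastic matrices that resample, respectively, the even and odd sub-lattice spins from the conditional Gibbs measure, and suppose the even/odd entropy factorization Ent_μ(f) ≤ C·μ[Ent_μ(f|σ_E) + Ent_μ(f|σ_O)] holds for all f ≥ 0. Then the reversible average P = (P_E + P_O)/2 satisfies Ent_μ(Pf) ≤ (1 − 1/(2C))·Ent_μ(f), and consequently the non-reversible scan chains P_E P_O and P_O P_E satisfy the same entropy contraction. -/
open scoped Classical BigOperators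

noncomputable def ent {Ω : Type*} [Fintype Ω] (π f : Ω → ℝ) : ℝ :=
  (∑ x, π x * f x * Real.log (f x)) - (∑ x, π x * f x) * Real.log (∑ x, π x * f x)

noncomputable def condMean {Ω α : Type*} [Fintype Ω] (ν : Ω → ℝ) (g : Ω → α)
    (f : Ω → ℝ) (x : Ω) : ℝ :=
  (∑ y, if g y = g x then ν y * f y else 0) / (∑ y, if g y = g x then ν y else 0)

noncomputable def avgCondEnt {Ω α : Type*} [Fintype Ω] (ν : Ω → ℝ) (g : Ω → α)
    (f : Ω → ℝ) : ℝ :=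
  ∑ x, ν x * f x * (Real.log (f x) - Real.log (condMean ν g f x))

noncomputable def matMulVec {Ω : Type*} [Fintype Ω] (P : Ω → Ω → ℝ) (f : Ω → ℝ) (x : Ω) : ℝ :=
  ∑ y, P x y * f y

noncomputable def dirForm {Ω : Type*} [Fintype Ω] (π : Ω → ℝ) (P : Ω → Ω → ℝ)
    (f g : Ω → ℝ) : ℝ :=
  ∑ x, π x * f x * (g x - matMulVec P g x)

noncomputable def stepDist {Ω : Type*} [Fintype Ω] (P : Ω → Ω → ℝ) (ζ : Ω → ℝ) (y : Ω) : ℝ :=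
  ∑ x, ζ x * P x y

noncomputable def adjointMat {Ω : Type*} [Fintype Ω] (π : Ω → ℝ) (P : Ω → Ω → ℝ)
    (x y : Ω) : ℝ :=
  π y * P y x / π x

noncomputable def matComp {Ω : Type*} [Fintype Ω] (P Q : Ω → Ω → ℝ) (x y : Ω) : ℝ :=
  ∑ z, P x z * Q z y

/-- Weight of a joint spin/edge (Edwards–Sokal) configuration: `p^{|A|}(1-p)^{|E|-|A|} 1(A ⊆ M(σ))`
with `p = 1 - e^{-β}`. -/
noncomputable def esWeight {V : Type*} [Fintype V] [DecidableEq V]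
    (E : Finset (V × V)) (q : ℕ) (β : ℝ) (z : (V → Fin q) × Finset (V × V)) : ℝ :=
  (1 - Real.exp (-β)) ^ z.2.card * Real.exp (-β) ^ (E.card - z.2.card) *
    (if z.2 ⊆ E.filter (fun e => z.1 e.1 = z.1 e.2) then 1 else 0)

/-- The Edwards–Sokal joint measure. -/
noncomputable def esMeasure {V : Type*} [Fintype V] [DecidableEq V]
    (E : Finset (V × V)) (q : ℕ) (β : ℝ) (z : (V → Fin q) × Finset (V × V)) : ℝ :=
  esWeight E q β z / ∑ w : (V → Fin q) × Finset (V × V), esWeight E q β w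

/-- The ferromagnetic `q`-state Potts Gibbs measure: `μ(σ) ∝ exp(-β |D(σ)|)`. -/
noncomputable def pottsMeasure {V : Type*} [Fintype V] [DecidableEq V]
    (E : Finset (V × V)) (q : ℕ) (β : ℝ) (σ : V → Fin q) : ℝ :=
  Real.exp (-β * ((E.filter (fun e => σ e.1 ≠ σ e.2)).card : ℝ)) /
    ∑ τ : V → Fin q, Real.exp (-β * ((E.filter (fun e => τ e.1 ≠ τ e.2)).card : ℝ))

/-- Swendsen–Wang transition matrix on spin configurations:
`P(σ,τ) = ∑_A ν(A|σ) ν(τ|A)`. -/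
noncomputable def swMatrix {V : Type*} [Fintype V] [DecidableEq V]
    (E : Finset (V × V)) (q : ℕ) (β : ℝ) (σ τ : V → Fin q) : ℝ :=
  ∑ A : Finset (V × V),
    (esMeasure E q β (σ, A) / ∑ B : Finset (V × V), esMeasure E q β (σ, B)) *
    (esMeasure E q β (τ, A) / ∑ ρ : V → Fin q, esMeasure E q β (ρ, A))


section AuxEntropy

open Finset

variable {Ω α : Type*} [Fintype Ω] [Fintype α] {ν : Ω → ℝ} {g : Ω → α} {f : Ω → ℝ}

lemma denomD_pos (hν : ∀ x, 0 < ν x) (x : Ω) :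
    0 < ∑ y, if g y = g x then ν y else 0 := by
  have h1 : (if g x = g x then ν x else 0) ≤ ∑ y, if g y = g x then ν y else 0 :=
    Finset.single_le_sum (f := fun y => if g y = g x then ν y else 0)
      (fun y _ => by by_cases h : g y = g x <;> simp [h, (hν y).le]) (Finset.mem_univ x)
  simp only [if_pos rfl] at h1
  exact lt_of_lt_of_le (hν x) h1

lemma condMean_congr {x y : Ω} (hxy : g x = g y) :
    condMean ν g f x = condMean ν g f y := by
  simp only [condMean, hxy]

lemma condMean_nonneg (hν : ∀ x, 0 ≤ ν x) (hf : ∀ x, 0 ≤ f x) (x : Ω) :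
    0 ≤ condMean ν g f x := by
  simp only [condMean]
  refine div_nonneg (Finset.sum_nonneg fun y _ => ?_) (Finset.sum_nonneg fun y _ => ?_)
  · by_cases h : g y = g x <;> simp [h, mul_nonneg (hν y) (hf y)]
  · by_cases h : g y = g x <;> simp [h, hν y]

lemma condMean_apply (ν : Ω → ℝ) (g : Ω → α) (f : Ω → ℝ) (x : Ω) :
    condMean ν g f x
      = (∑ y ∈ Finset.univ.filter fun y => g y = g x, ν y * f y)
        / (∑ y ∈ Finset.univ.filter fun y => g y = g x, ν y) := by
  simp only [condMean, Finset.sum_filter]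

lemma sum_condMean_mul (hν : ∀ x, 0 < ν x) (h : Ω → ℝ)
    (hh : ∀ x y, g x = g y → h x = h y) :
    ∑ x, ν x * condMean ν g f x * h x = ∑ x, ν x * f x * h x := by
  classical
  rw [← Finset.sum_fiberwise Finset.univ g (fun x => ν x * condMean ν g f x * h x),
      ← Finset.sum_fiberwise Finset.univ g (fun x => ν x * f x * h x)]
  refine Finset.sum_congr rfl fun a _ => ?_
  rcases Finset.eq_empty_or_nonempty (Finset.univ.filter fun x => g x = a) with he | ⟨x0, hx0⟩
  · rw [he, Finset.sum_empty, Finset.sum_empty]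
  · have hga : g x0 = a := (Finset.mem_filter.1 hx0).2
    have hfib : ∀ x ∈ Finset.univ.filter fun x => g x = a, g x = g x0 := fun x hx => by
      rw [(Finset.mem_filter.1 hx).2, hga]
    have hcm : ∀ x ∈ Finset.univ.filter fun x => g x = a,
        condMean ν g f x
          = (∑ y ∈ Finset.univ.filter fun y => g y = a, ν y * f y)
            / (∑ y ∈ Finset.univ.filter fun y => g y = a, ν y) := by
      intro x hx
      rw [condMean_apply]
      simp only [(Finset.mem_filter.1 hx).2]
    have hDpos : (0:ℝ) < ∑ y ∈ Finset.univ.filter fun y => g y = a, ν y :=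
      Finset.sum_pos (fun x _ => hν x) ⟨x0, hx0⟩
    calc ∑ x ∈ Finset.univ.filter fun x => g x = a, ν x * condMean ν g f x * h x
        = ∑ x ∈ Finset.univ.filter fun x => g x = a,
            ν x * ((∑ y ∈ Finset.univ.filter fun y => g y = a, ν y * f y)
              / (∑ y ∈ Finset.univ.filter fun y => g y = a, ν y)) * h x0 :=
          Finset.sum_congr rfl fun x hx => by rw [hcm x hx, hh x x0 (hfib x hx)]
      _ = ((∑ y ∈ Finset.univ.filter fun y => g y = a, ν y * f y)
              / (∑ y ∈ Finset.univ.filter fun y => g y = a, ν y)) * h x0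
            * ∑ x ∈ Finset.univ.filter fun x => g x = a, ν x := by
          rw [Finset.mul_sum]
          exact Finset.sum_congr rfl fun x _ => by ring
      _ = (∑ y ∈ Finset.univ.filter fun y => g y = a, ν y * f y) * h x0 := by
          field_simp
      _ = ∑ x ∈ Finset.univ.filter fun x => g x = a, ν x * f x * h x := by
          rw [Finset.sum_mul]
          exact Finset.sum_congr rfl fun x hx => by rw [hh x x0 (hfib x hx)]

lemma ent_decomp (hν : ∀ x, 0 < ν x) :
    ent ν f = avgCondEnt ν g f + ent ν (condMean ν g f) := by
  have h1 : ∑ x, ν x * condMean ν g f x = ∑ x, ν x * f x := by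
    have := sum_condMean_mul (g := g) (f := f) hν (fun _ => (1:ℝ)) (fun _ _ _ => rfl)
    simpa using this
  have h2 : ∑ x, ν x * condMean ν g f x * Real.log (condMean ν g f x)
      = ∑ x, ν x * f x * Real.log (condMean ν g f x) :=
    sum_condMean_mul hν _ (fun x y hxy => by rw [condMean_congr hxy])
  simp only [ent, avgCondEnt, mul_sub]
  rw [Finset.sum_sub_distrib, h1, h2]
  ring

lemma condMean_idem (hν : ∀ x, 0 < ν x) (x : Ω) :
    condMean ν g (condMean ν g f) x = condMean ν g f x := by
  have hD := denomD_pos (g := g) hν x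
  have hnum : (∑ y, if g y = g x then ν y * condMean ν g f y else 0)
      = condMean ν g f x * ∑ y, if g y = g x then ν y else 0 := by
    rw [Finset.mul_sum]
    refine Finset.sum_congr rfl fun y _ => ?_
    by_cases h : g y = g x
    · rw [if_pos h, if_pos h, condMean_congr h]; ring
    · simp [h]
  conv_lhs => rw [condMean]
  rw [hnum, mul_div_assoc, div_self hD.ne', mul_one]

lemma avgCondEnt_condMean (hν : ∀ x, 0 < ν x) :
    avgCondEnt ν g (condMean ν g f) = 0 := by
  simp only [avgCondEnt]
  refine Finset.sum_eq_zero fun x _ => ?_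
  rw [condMean_idem hν x]
  simp

lemma avgCondEnt_nonneg (hν : ∀ x, 0 < ν x) (hf : ∀ x, 0 ≤ f x) :
    0 ≤ avgCondEnt ν g f := by
  classical
  rw [avgCondEnt, ← Finset.sum_fiberwise Finset.univ g
    (fun x => ν x * f x * (Real.log (f x) - Real.log (condMean ν g f x)))]
  refine Finset.sum_nonneg fun a _ => ?_
  rcases Finset.eq_empty_or_nonempty (Finset.univ.filter fun x => g x = a) with he | ⟨x0, hx0⟩
  · rw [he, Finset.sum_empty]
  · have hga : g x0 = a := (Finset.mem_filter.1 hx0).2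
    have hDpos : (0:ℝ) < ∑ y ∈ Finset.univ.filter fun y => g y = a, ν y :=
      Finset.sum_pos (fun x _ => hν x) ⟨x0, hx0⟩
    have hcm : ∀ x ∈ Finset.univ.filter fun x => g x = a,
        condMean ν g f x
          = (∑ y ∈ Finset.univ.filter fun y => g y = a, ν y * f y)
            / (∑ y ∈ Finset.univ.filter fun y => g y = a, ν y) := by
      intro x hx
      rw [condMean_apply]
      simp only [(Finset.mem_filter.1 hx).2]
    have key := Real.convexOn_mul_log.map_sum_le
      (t := Finset.univ.filter fun x => g x = a)
      (w := fun x => ν x / ∑ y ∈ Finset.univ.filter fun y => g y = a, ν y) (p := f)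
      (fun i _ => div_nonneg (hν i).le hDpos.le)
      (by
        rw [← Finset.sum_div]
        exact div_self hDpos.ne')
      (fun i _ => Set.mem_Ici.2 (hf i))
    simp only [smul_eq_mul] at key
    have hwf : ∑ i ∈ Finset.univ.filter fun x => g x = a,
        ν i / (∑ y ∈ Finset.univ.filter fun y => g y = a, ν y) * f i
        = (∑ i ∈ Finset.univ.filter fun x => g x = a, ν i * f i)
            / (∑ y ∈ Finset.univ.filter fun y => g y = a, ν y) := by
      rw [Finset.sum_div]
      exact Finset.sum_congr rfl fun i _ => by ring
    have hwphi : ∑ i ∈ Finset.univ.filter fun x => g x = a,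
        ν i / (∑ y ∈ Finset.univ.filter fun y => g y = a, ν y) * (f i * Real.log (f i))
        = (∑ i ∈ Finset.univ.filter fun x => g x = a, ν i * (f i * Real.log (f i)))
            / (∑ y ∈ Finset.univ.filter fun y => g y = a, ν y) := by
      rw [Finset.sum_div]
      exact Finset.sum_congr rfl fun i _ => by ring
    rw [hwf, hwphi] at key
    have key2 : (∑ i ∈ Finset.univ.filter fun x => g x = a, ν i * f i)
          * Real.log ((∑ i ∈ Finset.univ.filter fun x => g x = a, ν i * f i)
              / (∑ y ∈ Finset.univ.filter fun y => g y = a, ν y))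
        ≤ ∑ i ∈ Finset.univ.filter fun x => g x = a, ν i * (f i * Real.log (f i)) := by
      have h := mul_le_mul_of_nonneg_right key hDpos.le
      rw [div_mul_cancel₀ _ hDpos.ne'] at h
      calc (∑ i ∈ Finset.univ.filter fun x => g x = a, ν i * f i)
            * Real.log ((∑ i ∈ Finset.univ.filter fun x => g x = a, ν i * f i)
                / (∑ y ∈ Finset.univ.filter fun y => g y = a, ν y))
          = (∑ i ∈ Finset.univ.filter fun x => g x = a, ν i * f i)
              / (∑ y ∈ Finset.univ.filter fun y => g y = a, ν y)
            * Real.log ((∑ i ∈ Finset.univ.filter fun x => g x = a, ν i * f i)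
                / (∑ y ∈ Finset.univ.filter fun y => g y = a, ν y))
            * (∑ y ∈ Finset.univ.filter fun y => g y = a, ν y) := by
            field_simp
        _ ≤ _ := h
    have hsum_eq : ∑ x ∈ Finset.univ.filter fun x => g x = a,
        ν x * f x * (Real.log (f x) - Real.log (condMean ν g f x))
        = (∑ x ∈ Finset.univ.filter fun x => g x = a, ν x * (f x * Real.log (f x)))
          - (∑ x ∈ Finset.univ.filter fun x => g x = a, ν x * f x)
            * Real.log ((∑ i ∈ Finset.univ.filter fun x => g x = a, ν i * f i)
                / (∑ y ∈ Finset.univ.filter fun y => g y = a, ν y)) := by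
      calc ∑ x ∈ Finset.univ.filter fun x => g x = a,
            ν x * f x * (Real.log (f x) - Real.log (condMean ν g f x))
          = ∑ x ∈ Finset.univ.filter fun x => g x = a,
            (ν x * (f x * Real.log (f x)) - ν x * f x
              * Real.log ((∑ i ∈ Finset.univ.filter fun x => g x = a, ν i * f i)
                / (∑ y ∈ Finset.univ.filter fun y => g y = a, ν y))) :=
            Finset.sum_congr rfl fun x hx => by rw [hcm x hx]; ring
        _ = _ := by rw [Finset.sum_sub_distrib, Finset.sum_mul]
    rw [hsum_eq]
    linarith [key2]

lemma ent_nonneg (hν : ∀ x, 0 < ν x) (hν1 : ∑ x, ν x = 1) (hf : ∀ x, 0 ≤ f x) :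
    0 ≤ ent ν f := by
  have key := Real.convexOn_mul_log.map_sum_le (t := Finset.univ) (w := ν) (p := f)
    (fun i _ => (hν i).le) hν1 (fun i _ => Set.mem_Ici.2 (hf i))
  simp only [smul_eq_mul] at key
  simp only [ent]
  have h : ∑ x, ν x * f x * Real.log (f x) = ∑ x, ν x * (f x * Real.log (f x)) :=
    Finset.sum_congr rfl fun x _ => by ring
  rw [h]
  linarith [key]

lemma ent_eq_sum (ν f : Ω → ℝ) :
    ent ν f = ∑ x, ν x * (f x * Real.log (f x) - f x * Real.log (∑ y, ν y * f y)) := by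
  rw [ent, show (∑ x, ν x * f x) * Real.log (∑ x, ν x * f x)
      = ∑ x, ν x * f x * Real.log (∑ y, ν y * f y) from by rw [Finset.sum_mul],
    ← Finset.sum_sub_distrib]
  exact Finset.sum_congr rfl fun x _ => by ring

lemma Lfun_half (a m : ℝ) (ha : 0 ≤ a) (ham : 0 < a → 0 < m) :
    a / 2 * Real.log (a / 2) - a / 2 * Real.log (m / 2)
      = (a * Real.log a - a * Real.log m) / 2 := by
  rcases ha.lt_or_eq with h | h
  · have hm := ham h
    rw [Real.log_div h.ne' two_ne_zero, Real.log_div hm.ne' two_ne_zero]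
    ring
  · rw [← h]; simp

lemma Lfun_add (a b m n : ℝ) (ha : 0 ≤ a) (hb : 0 ≤ b) (hm : 0 ≤ m) (hn : 0 ≤ n)
    (ham : 0 < a → 0 < m) (hbn : 0 < b → 0 < n) :
    (a + b) * Real.log (a + b) - (a + b) * Real.log (m + n)
      ≤ (a * Real.log a - a * Real.log m) + (b * Real.log b - b * Real.log n) := by
  rcases ha.lt_or_eq with hapos | ha0
  · rcases hb.lt_or_eq with hbpos | hb0
    · have hm' := ham hapos
      have hn' := hbn hbpos
      have hmn : (0:ℝ) < m + n := by linarith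
      have key := Real.convexOn_mul_log.2 (Set.mem_Ici.2 (by positivity : (0:ℝ) ≤ a / m))
        (Set.mem_Ici.2 (by positivity : (0:ℝ) ≤ b / n))
        (by positivity : (0:ℝ) ≤ m / (m + n)) (by positivity : (0:ℝ) ≤ n / (m + n))
        (by field_simp)
      simp only [smul_eq_mul] at key
      have harg : m / (m + n) * (a / m) + n / (m + n) * (b / n) = (a + b) / (m + n) := by
        field_simp
      rw [harg] at key
      have key2 := mul_le_mul_of_nonneg_left key hmn.le
      have e1 : (m + n) * ((a + b) / (m + n) * Real.log ((a + b) / (m + n)))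
          = (a + b) * Real.log ((a + b) / (m + n)) := by field_simp
      have e2 : (m + n) * (m / (m + n) * (a / m * Real.log (a / m))
            + n / (m + n) * (b / n * Real.log (b / n)))
          = a * Real.log (a / m) + b * Real.log (b / n) := by
        field_simp
      rw [e1, e2, Real.log_div (by linarith : a + b ≠ 0) hmn.ne',
        Real.log_div hapos.ne' hm'.ne', Real.log_div hbpos.ne' hn'.ne'] at key2
      nlinarith [key2]
    · have hm' := ham hapos
      rw [← hb0]
      simp only [add_zero, zero_mul, sub_zero]
      have hlog : Real.log m ≤ Real.log (m + n) := Real.log_le_log hm' (by linarith)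
      linarith [mul_le_mul_of_nonneg_left hlog hapos.le]
  · rw [← ha0]
    simp only [zero_add, zero_mul, zero_sub, neg_zero, sub_zero]
    rcases hb.lt_or_eq with hbpos | hb0
    · have hn' := hbn hbpos
      have hlog : Real.log n ≤ Real.log (m + n) := Real.log_le_log hn' (by linarith)
      linarith [mul_le_mul_of_nonneg_left hlog hbpos.le]
    · rw [← hb0]
      simp

lemma Lfun_mid (a b m n : ℝ) (ha : 0 ≤ a) (hb : 0 ≤ b) (hm : 0 ≤ m) (hn : 0 ≤ n)
    (ham : 0 < a → 0 < m) (hbn : 0 < b → 0 < n) :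
    (a + b) / 2 * Real.log ((a + b) / 2) - (a + b) / 2 * Real.log ((m + n) / 2)
      ≤ ((a * Real.log a - a * Real.log m) + (b * Real.log b - b * Real.log n)) / 2 := by
  have hab : 0 ≤ a + b := by linarith
  have hmn : 0 < a + b → 0 < m + n := by
    intro h
    rcases ha.lt_or_eq with h1 | h1
    · linarith [ham h1]
    · have : 0 < b := by linarith
      linarith [hbn this]
  rw [Lfun_half (a + b) (m + n) hab hmn]
  have := Lfun_add a b m n ha hb hm hn ham hbn
  linarith

lemma ent_midpoint (u v : Ω → ℝ) (hν : ∀ x, 0 < ν x) (hu : ∀ x, 0 ≤ u x)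
    (hv : ∀ x, 0 ≤ v x) :
    ent ν (fun x => (u x + v x) / 2) ≤ (ent ν u + ent ν v) / 2 := by
  have hSw : ∑ y, ν y * ((u y + v y) / 2)
      = ((∑ y, ν y * u y) + ∑ y, ν y * v y) / 2 := by
    rw [← Finset.sum_add_distrib, Finset.sum_div]
    exact Finset.sum_congr rfl fun x _ => by ring
  have hSu0 : 0 ≤ ∑ y, ν y * u y :=
    Finset.sum_nonneg fun y _ => mul_nonneg (hν y).le (hu y)
  have hSv0 : 0 ≤ ∑ y, ν y * v y :=
    Finset.sum_nonneg fun y _ => mul_nonneg (hν y).le (hv y)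
  have hSu : ∀ x, 0 < u x → 0 < ∑ y, ν y * u y := fun x hx =>
    lt_of_lt_of_le (mul_pos (hν x) hx)
      (Finset.single_le_sum (fun y _ => mul_nonneg (hν y).le (hu y)) (Finset.mem_univ x))
  have hSv : ∀ x, 0 < v x → 0 < ∑ y, ν y * v y := fun x hx =>
    lt_of_lt_of_le (mul_pos (hν x) hx)
      (Finset.single_le_sum (fun y _ => mul_nonneg (hν y).le (hv y)) (Finset.mem_univ x))
  simp only [ent_eq_sum]
  rw [hSw]
  conv_rhs => rw [← Finset.sum_add_distrib, Finset.sum_div]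
  apply Finset.sum_le_sum
  intro x _
  have key := Lfun_mid (u x) (v x) (∑ y, ν y * u y) (∑ y, ν y * v y)
    (hu x) (hv x) hSu0 hSv0 (hSu x) (hSv x)
  have := mul_le_mul_of_nonneg_left key (hν x).le
  linarith [this]

end AuxEntropy


/-- Even/odd factorization of entropy with constant `C` for the Potts measure on a
bipartite graph implies entropy contraction at rate `1 - 1/(2C)` for the average
`(P_E+P_O)/2` and for the scan chains `P_E P_O` and `P_O P_E`, where
`P_E f = μ[f|σ_O]` (resampling the even spins) and `P_O f = μ[f|σ_E]`.
Even vertices are those with `parity v = true`. -/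
theorem stmt15 {V : Type*} [Fintype V] [DecidableEq V]
    (E : Finset (V × V)) (parity : V → Bool)
    (hbip : ∀ e ∈ E, parity e.1 ≠ parity e.2)
    (q : ℕ) (hq : 2 ≤ q) (β : ℝ) (hβ : 0 < β)
    (C : ℝ) (hC : 1 ≤ C)
    (hfact : ∀ f : (V → Fin q) → ℝ, (∀ σ, 0 ≤ f σ) →
      ent (pottsMeasure E q β) f ≤
        C * (avgCondEnt (pottsMeasure E q β)
               (fun σ => fun v : {v : V // parity v = true} => σ v.1) f +
             avgCondEnt (pottsMeasure E q β)
               (fun σ => fun v : {v : V // parity v = false} => σ v.1) f)) :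
    ∀ f : (V → Fin q) → ℝ, (∀ σ, 0 ≤ f σ) →
      (ent (pottsMeasure E q β)
          (fun σ =>
            (condMean (pottsMeasure E q β)
                (fun σ' => fun v : {v : V // parity v = false} => σ' v.1) f σ +
             condMean (pottsMeasure E q β)
                (fun σ' => fun v : {v : V // parity v = true} => σ' v.1) f σ) / 2) ≤
        (1 - 1 / (2 * C)) * ent (pottsMeasure E q β) f) ∧
      (ent (pottsMeasure E q β)
          (condMean (pottsMeasure E q β)
            (fun σ' => fun v : {v : V // parity v = false} => σ' v.1)
            (condMean (pottsMeasure E q β)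
              (fun σ' => fun v : {v : V // parity v = true} => σ' v.1) f)) ≤
        (1 - 1 / (2 * C)) * ent (pottsMeasure E q β) f) ∧
      (ent (pottsMeasure E q β)
          (condMean (pottsMeasure E q β)
            (fun σ' => fun v : {v : V // parity v = true} => σ' v.1)
            (condMean (pottsMeasure E q β)
              (fun σ' => fun v : {v : V // parity v = false} => σ' v.1) f)) ≤
        (1 - 1 / (2 * C)) * ent (pottsMeasure E q β) f) := by
  intro f hf
  have hq0 : 0 < q := by omega
  haveI : Nonempty (Fin q) := ⟨⟨0, hq0⟩⟩
  have hZ : (0:ℝ) < ∑ τ : V → Fin q,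
      Real.exp (-β * ((E.filter (fun e => τ e.1 ≠ τ e.2)).card : ℝ)) :=
    Finset.sum_pos (fun τ _ => Real.exp_pos _) Finset.univ_nonempty
  have hπ : ∀ σ, 0 < pottsMeasure E q β σ := fun σ => div_pos (Real.exp_pos _) hZ
  have hπ1 : ∑ σ, pottsMeasure E q β σ = 1 := by
    simp only [pottsMeasure]
    rw [← Finset.sum_div, div_self hZ.ne']
  set π := pottsMeasure E q β with hπdef
  set gE : (V → Fin q) → ({v : V // parity v = true} → Fin q) :=
    fun σ => fun v => σ v.1 with hgEdef
  set gO : (V → Fin q) → ({v : V // parity v = false} → Fin q) :=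
    fun σ => fun v => σ v.1 with hgOdef
  have hC0 : (0:ℝ) < C := lt_of_lt_of_le one_pos hC
  have hCne : C ≠ 0 := hC0.ne'
  have hAnn : ∀ σ, 0 ≤ condMean π gE f σ :=
    condMean_nonneg (fun x => (hπ x).le) hf
  have hBnn : ∀ σ, 0 ≤ condMean π gO f σ :=
    condMean_nonneg (fun x => (hπ x).le) hf
  have dE : ent π f = avgCondEnt π gE f + ent π (condMean π gE f) := ent_decomp hπ
  have dO : ent π f = avgCondEnt π gO f + ent π (condMean π gO f) := ent_decomp hπ
  have dOA : ent π (condMean π gE f)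
      = avgCondEnt π gO (condMean π gE f) + ent π (condMean π gO (condMean π gE f)) :=
    ent_decomp hπ
  have dEB : ent π (condMean π gO f)
      = avgCondEnt π gE (condMean π gO f) + ent π (condMean π gE (condMean π gO f)) :=
    ent_decomp hπ
  have zE : avgCondEnt π gE (condMean π gE f) = 0 := avgCondEnt_condMean hπ
  have zO : avgCondEnt π gO (condMean π gO f) = 0 := avgCondEnt_condMean hπ
  have hEnn : 0 ≤ avgCondEnt π gE f := avgCondEnt_nonneg hπ hf
  have hOnn : 0 ≤ avgCondEnt π gO f := avgCondEnt_nonneg hπ hf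
  have hentf : 0 ≤ ent π f := ent_nonneg hπ hπ1 hf
  have hfac := hfact f hf
  have hfacA := hfact (condMean π gE f) hAnn
  have hfacB := hfact (condMean π gO f) hBnn
  rw [zE, zero_add] at hfacA
  rw [zO, add_zero] at hfacB
  have hfrac : 0 ≤ 1 - 1/C := by
    have : 1/C ≤ 1 := (div_le_one hC0).2 hC
    linarith
  have h3 : 1/(2*C) ≤ 1/C := one_div_le_one_div_of_le hC0 (by linarith)
  have h4 : 1 - 1/C ≤ 1 - 1/(2*C) := by linarith
  refine ⟨?_, ?_, ?_⟩
  · have hmid := ent_midpoint (condMean π gO f) (condMean π gE f) hπ hBnn hAnn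
    have hkey : ent π f / C ≤ avgCondEnt π gE f + avgCondEnt π gO f := by
      rw [div_le_iff₀ hC0]
      linarith [hfac]
    have hre : (1 - 1/(2*C)) * ent π f = ent π f - ent π f / C / 2 := by
      field_simp
    rw [hre]
    calc ent π (fun σ => (condMean π gO f σ + condMean π gE f σ) / 2)
        ≤ (ent π (condMean π gO f) + ent π (condMean π gE f)) / 2 := hmid
      _ ≤ ent π f - ent π f / C / 2 := by linarith [dE, dO, hkey]
  · have h1 : ent π (condMean π gE f) / C ≤ avgCondEnt π gO (condMean π gE f) := by
      rw [div_le_iff₀ hC0]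
      linarith [hfacA]
    have hAle : ent π (condMean π gE f) ≤ ent π f := by linarith [dE, hEnn]
    have h2 : ent π (condMean π gO (condMean π gE f))
        ≤ ent π (condMean π gE f) * (1 - 1/C) := by
      have he : ent π (condMean π gE f) * (1 - 1/C)
          = ent π (condMean π gE f) - ent π (condMean π gE f) / C := by
        field_simp
      rw [he]
      linarith [dOA, h1]
    calc ent π (condMean π gO (condMean π gE f))
        ≤ ent π (condMean π gE f) * (1 - 1/C) := h2
      _ ≤ ent π f * (1 - 1/C) := mul_le_mul_of_nonneg_right hAle hfrac
      _ ≤ (1 - 1/(2*C)) * ent π f := by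
          rw [mul_comm (1 - 1/(2*C)) (ent π f)]
          exact mul_le_mul_of_nonneg_left h4 hentf
  · have h1 : ent π (condMean π gO f) / C ≤ avgCondEnt π gE (condMean π gO f) := by
      rw [div_le_iff₀ hC0]
      linarith [hfacB]
    have hBle : ent π (condMean π gO f) ≤ ent π f := by linarith [dO, hOnn]
    have h2 : ent π (condMean π gE (condMean π gO f))
        ≤ ent π (condMean π gO f) * (1 - 1/C) := by
      have he : ent π (condMean π gO f) * (1 - 1/C)
          = ent π (condMean π gO f) - ent π (condMean π gO f) / C := by
        field_simp
      rw [he]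
      linarith [dEB, h1]
    calc ent π (condMean π gE (condMean π gO f))
        ≤ ent π (condMean π gO f) * (1 - 1/C) := h2
      _ ≤ ent π f * (1 - 1/C) := mul_le_mul_of_nonneg_right hBle hfrac
      _ ≤ (1 - 1/(2*C)) * ent π f := by
          rw [mul_comm (1 - 1/(2*C)) (ent π f)]
          exact mul_le_mul_of_nonneg_left h4 hentf
end

section
/- Suppose the Swendsen-Wang dynamics on edge (random-cluster) configurations, with stationary distribution ρ equal to the edge marginal of a joint Edwards-Sokal measure ν, satisfies Ent_ρ(P̃_SW g) ≤ (1−δ)·Ent_ρ(g) for all nonnegative functions g of the edges. Then the Swendsen-Wang dynamics on spin configurations, with stationary distribution μ equal to the spin marginal of ν, satisfies Ent_μ(P_SW^ℓ f) ≤ (1−δ)^{ℓ−1}·Ent_μ(f) for all ℓ ≥ 1 and all nonnegative functions f of the spins. -/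
open scoped Classical BigOperators

/-- Swendsen–Wang transition matrix on edge (random-cluster) configurations:
`P̃(A,B) = ∑_σ ν(σ|A) ν(B|σ)`. -/
noncomputable def swEdgeMatrix {V : Type*} [Fintype V] [DecidableEq V]
    (E : Finset (V × V)) (q : ℕ) (β : ℝ) (A B : Finset (V × V)) : ℝ :=
  ∑ σ : V → Fin q,
    (esMeasure E q β (σ, A) / ∑ τ : V → Fin q, esMeasure E q β (τ, A)) *
    (esMeasure E q β (σ, B) / ∑ B' : Finset (V × V), esMeasure E q β (σ, B'))

/-!
Write `K` and `T` for the two conditional expectations of the Edwards–Sokal measure (spins given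
edges, edges given spins). Then `P_SW = K T` and `P̃_SW = T K`, hence `P_SW^ℓ = K (T K)^(ℓ-1) T`.
By Jensen's inequality for the convex function `x ↦ x log x`, each conditional expectation maps
a function to one of no larger entropy (with respect to the corresponding marginal), so the
outer `K` and `T` cost nothing and each of the `ℓ - 1` edge steps gains a factor `1 - δ`.
-/

/-- `condAvg ν g s` is the conditional expectation `ν[g | s]` of a function `g` of the second
coordinate under the (unnormalised) joint weight `ν` on `S × T`. -/
noncomputable def condAvg {S T : Type*} [Fintype T] (ν : S → T → ℝ) (g : T → ℝ) (s : S) : ℝ :=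
  ∑ t, ν s t / (∑ t', ν s t') * g t

section CondAvg

variable {S T : Type*} [Fintype T] {ν : S → T → ℝ}

lemma condAvg_nonneg (hν : ∀ s t, 0 ≤ ν s t) {g : T → ℝ} (hg : ∀ t, 0 ≤ g t) (s : S) :
    0 ≤ condAvg ν g s :=
  Finset.sum_nonneg fun t _ =>
    mul_nonneg (div_nonneg (hν s t) (Finset.sum_nonneg fun t' _ => hν s t')) (hg t)

lemma sum_mul_condAvg (hν : ∀ s t, 0 ≤ ν s t) (g : T → ℝ) (s : S) :
    (∑ t, ν s t) * condAvg ν g s = ∑ t, ν s t * g t := by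
  rcases (Finset.sum_nonneg fun t _ => hν s t).eq_or_lt with h | h
  · have hz := (Finset.sum_eq_zero_iff_of_nonneg fun t _ => hν s t).mp h.symm
    rw [← h, zero_mul]
    exact (Finset.sum_eq_zero fun t ht => by rw [hz t ht, zero_mul]).symm
  · rw [condAvg, Finset.mul_sum]
    refine Finset.sum_congr rfl fun t _ => ?_
    field_simp

lemma sum_mul_condAvg_mul_log_le (hν : ∀ s t, 0 ≤ ν s t) {g : T → ℝ} (hg : ∀ t, 0 ≤ g t)
    (s : S) :
    (∑ t, ν s t) * condAvg ν g s * Real.log (condAvg ν g s) ≤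
      ∑ t, ν s t * g t * Real.log (g t) := by
  rcases (Finset.sum_nonneg fun t _ => hν s t).eq_or_lt with h | h
  · have hz := (Finset.sum_eq_zero_iff_of_nonneg fun t _ => hν s t).mp h.symm
    rw [← h, zero_mul, zero_mul]
    exact (Finset.sum_eq_zero fun t ht => by rw [hz t ht, zero_mul, zero_mul]).ge
  · have hm := h.ne'
    have jensen := Real.convexOn_mul_log.map_sum_le (t := Finset.univ)
      (w := fun t => ν s t / ∑ t', ν s t') (p := g) (fun t _ => div_nonneg (hν s t) h.le)
      (by rw [← Finset.sum_div, div_self hm]) (fun t _ => Set.mem_Ici.2 (hg t))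
    simp only [smul_eq_mul] at jensen
    calc (∑ t, ν s t) * condAvg ν g s * Real.log (condAvg ν g s)
        = (∑ t, ν s t) * (condAvg ν g s * Real.log (condAvg ν g s)) := mul_assoc _ _ _
      _ ≤ (∑ t, ν s t) * ∑ t, ν s t / (∑ t', ν s t') * (g t * Real.log (g t)) := by
        gcongr; exact jensen
      _ = ∑ t, ν s t * g t * Real.log (g t) := by
        rw [Finset.mul_sum]
        refine Finset.sum_congr rfl fun t _ => ?_
        field_simp

theorem ent_condAvg_le [Fintype S] (hν : ∀ s t, 0 ≤ ν s t) {g : T → ℝ} (hg : ∀ t, 0 ≤ g t) :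
    ent (fun s => ∑ t, ν s t) (condAvg ν g) ≤ ent (fun t => ∑ s, ν s t) g := by
  have hmean : ∑ s, (∑ t, ν s t) * condAvg ν g s = ∑ t, (∑ s, ν s t) * g t := by
    simp_rw [sum_mul_condAvg hν, Finset.sum_mul]
    exact Finset.sum_comm
  rw [ent, ent, hmean, sub_le_sub_iff_right]
  calc ∑ s, (∑ t, ν s t) * condAvg ν g s * Real.log (condAvg ν g s)
      ≤ ∑ s, ∑ t, ν s t * g t * Real.log (g t) :=
        Finset.sum_le_sum fun s _ => sum_mul_condAvg_mul_log_le hν hg s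
    _ = ∑ t, (∑ s, ν s t) * g t * Real.log (g t) := by
        simp_rw [Finset.sum_mul]
        exact Finset.sum_comm

end CondAvg

theorem apply_iterate_le_pow_mul {X : Type*} {F : X → X} {Φ : X → ℝ} {s : Set X}
    (hF : Set.MapsTo F s s) {c : ℝ} (hc : 0 ≤ c) (h : ∀ x ∈ s, Φ (F x) ≤ c * Φ x) (n : ℕ)
    {x : X} (hx : x ∈ s) : Φ (F^[n] x) ≤ c ^ n * Φ x := by
  induction n with
  | zero => simp
  | succ n ih =>
    calc Φ (F^[n + 1] x) = Φ (F (F^[n] x)) := by rw [Function.iterate_succ_apply']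
      _ ≤ c * Φ (F^[n] x) := h _ (hF.iterate n hx)
      _ ≤ c * (c ^ n * Φ x) := by gcongr
      _ = c ^ (n + 1) * Φ x := by ring

section SwendsenWang

variable {V : Type*} [Fintype V] [DecidableEq V] (E : Finset (V × V)) (q : ℕ) {β : ℝ}

lemma esWeight_nonneg (hβ : 0 ≤ β) (z : (V → Fin q) × Finset (V × V)) :
    0 ≤ esWeight E q β z := by
  have hp : 0 ≤ 1 - Real.exp (-β) := sub_nonneg.2 (Real.exp_le_one_iff.2 (neg_nonpos.2 hβ))
  exact mul_nonneg (mul_nonneg (pow_nonneg hp _) (pow_nonneg (Real.exp_nonneg _) _))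
    (by split_ifs <;> norm_num)

lemma esMeasure_nonneg (hβ : 0 ≤ β) (z : (V → Fin q) × Finset (V × V)) :
    0 ≤ esMeasure E q β z :=
  div_nonneg (esWeight_nonneg E q hβ z) (Finset.sum_nonneg fun w _ => esWeight_nonneg E q hβ w)

variable (β)

lemma matMulVec_swMatrix (f : (V → Fin q) → ℝ) :
    matMulVec (swMatrix E q β) f =
      condAvg (fun σ A => esMeasure E q β (σ, A))
        (condAvg (fun (A : Finset (V × V)) σ => esMeasure E q β (σ, A)) f) := by
  funext σ
  simp only [matMulVec, swMatrix, condAvg, Finset.sum_mul, Finset.mul_sum]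
  rw [Finset.sum_comm]
  exact Finset.sum_congr rfl fun A _ => Finset.sum_congr rfl fun τ _ => by ring

lemma matMulVec_swEdgeMatrix (g : Finset (V × V) → ℝ) :
    matMulVec (swEdgeMatrix E q β) g =
      condAvg (fun (A : Finset (V × V)) σ => esMeasure E q β (σ, A))
        (condAvg (fun σ A => esMeasure E q β (σ, A)) g) := by
  funext A
  simp only [matMulVec, swEdgeMatrix, condAvg, Finset.sum_mul, Finset.mul_sum]
  rw [Finset.sum_comm]
  exact Finset.sum_congr rfl fun σ _ => Finset.sum_congr rfl fun B _ => by ring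

lemma matMulVec_swMatrix_iterate_succ (k : ℕ) (f : (V → Fin q) → ℝ) :
    (matMulVec (swMatrix E q β))^[k + 1] f =
      condAvg (fun σ A => esMeasure E q β (σ, A))
        ((matMulVec (swEdgeMatrix E q β))^[k]
          (condAvg (fun (A : Finset (V × V)) σ => esMeasure E q β (σ, A)) f)) := by
  have hsemiconj : Function.Semiconj (condAvg fun σ A => esMeasure E q β (σ, A))
      (matMulVec (swEdgeMatrix E q β)) (matMulVec (swMatrix E q β)) := fun g => by
    rw [matMulVec_swEdgeMatrix, matMulVec_swMatrix]
  rw [Function.iterate_succ_apply, matMulVec_swMatrix, hsemiconj.iterate_right k]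

end SwendsenWang

theorem stmt18_general {V : Type*} [Fintype V] [DecidableEq V]
    (E : Finset (V × V)) (q : ℕ) (β : ℝ) (hβ : 0 < β)
    (δ : ℝ) (hδ1 : δ ≤ 1)
    (hedge : ∀ g : Finset (V × V) → ℝ, (∀ A, 0 ≤ g A) →
      ent (fun A => ∑ σ : V → Fin q, esMeasure E q β (σ, A))
          (matMulVec (swEdgeMatrix E q β) g) ≤
        (1 - δ) * ent (fun A => ∑ σ : V → Fin q, esMeasure E q β (σ, A)) g) :
    ∀ ℓ : ℕ, 1 ≤ ℓ → ∀ f : (V → Fin q) → ℝ, (∀ σ, 0 ≤ f σ) →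
      ent (fun σ => ∑ A : Finset (V × V), esMeasure E q β (σ, A))
          ((matMulVec (swMatrix E q β))^[ℓ] f) ≤
        (1 - δ) ^ (ℓ - 1) *
          ent (fun σ => ∑ A : Finset (V × V), esMeasure E q β (σ, A)) f := by
  intro ℓ hℓ f hf
  obtain ⟨k, rfl⟩ := Nat.exists_eq_add_of_le' hℓ
  have hν : ∀ σ A, 0 ≤ esMeasure E q β (σ, A) := fun σ A => esMeasure_nonneg E q hβ.le _
  have hedge_nonneg : Set.MapsTo (matMulVec (swEdgeMatrix E q β))
      {g | ∀ A, 0 ≤ g A} {g | ∀ A, 0 ≤ g A} := fun g hg => by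
    rw [Set.mem_ofPred_eq, matMulVec_swEdgeMatrix]
    exact condAvg_nonneg (fun A σ => hν σ A) (condAvg_nonneg hν hg)
  have hTf : ∀ A, 0 ≤ condAvg (fun (A : Finset (V × V)) σ => esMeasure E q β (σ, A)) f A :=
    condAvg_nonneg (fun A σ => hν σ A) hf
  rw [Nat.add_sub_cancel, matMulVec_swMatrix_iterate_succ]
  calc _ ≤ _ := ent_condAvg_le hν (hedge_nonneg.iterate k hTf)
    _ ≤ _ := apply_iterate_le_pow_mul hedge_nonneg (sub_nonneg.2 hδ1) hedge k hTf
    _ ≤ _ := by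
      gcongr
      exact ent_condAvg_le (fun A σ => hν σ A) hf

/-- If the edge (random-cluster) Swendsen–Wang dynamics, with stationary measure the edge
marginal `ρ` of the Edwards–Sokal measure `ν`, contracts entropy at rate `δ`, then the
spin Swendsen–Wang dynamics, with stationary measure the spin marginal `μ`, satisfies
`Ent_μ(P_SW^ℓ f) ≤ (1-δ)^{ℓ-1} Ent_μ(f)` for all `ℓ ≥ 1` and nonnegative `f`. -/
theorem stmt18 {V : Type*} [Fintype V] [DecidableEq V]
    (E : Finset (V × V)) (q : ℕ) (hq : 2 ≤ q) (β : ℝ) (hβ : 0 < β)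
    (δ : ℝ) (hδ0 : 0 < δ) (hδ1 : δ ≤ 1)
    (hedge : ∀ g : Finset (V × V) → ℝ, (∀ A, 0 ≤ g A) →
      ent (fun A => ∑ σ : V → Fin q, esMeasure E q β (σ, A))
          (matMulVec (swEdgeMatrix E q β) g) ≤
        (1 - δ) * ent (fun A => ∑ σ : V → Fin q, esMeasure E q β (σ, A)) g) :
    ∀ ℓ : ℕ, 1 ≤ ℓ → ∀ f : (V → Fin q) → ℝ, (∀ σ, 0 ≤ f σ) →
      ent (fun σ => ∑ A : Finset (V × V), esMeasure E q β (σ, A))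
          ((matMulVec (swMatrix E q β))^[ℓ] f) ≤
        (1 - δ) ^ (ℓ - 1) *
          ent (fun σ => ∑ A : Finset (V × V), esMeasure E q β (σ, A)) f :=
  stmt18_general E q β hβ δ hδ1 hedge
end
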